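/- arXiv:2503.09254 — 2 statements merged into one kernel-verified Lean document; each statement's English description precedes it below -/
import Mathlib

section
/- Let G be a marked Gröbner basis of I with respect to < such that ω ∈ ℚ^n_{≥0} satisfies: for each g ∈ G with marked leading exponent α, ⟨α,ω⟩ ≥ ⟨β,ω⟩ for all β ∈ supp(g) (i.e. ω lies in the closed Gröbner cone of <). Then in_ω(G) = {in_ω(g) : g ∈ G} is a Gröbner basis of in_ω(I) with respect to <, and in_<(in_ω(g)) = in_<(g) for each g ∈ G. -/
open MvPolynomial

/-- A term ordering on the monomials (exponent vectors) of `k[x_1, …, x_n]`: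
a strict total well-ordering compatible with addition of exponents. -/
structure TermOrder (n : ℕ) where
  lt : (Fin n →₀ ℕ) → (Fin n →₀ ℕ) → Prop
  irrefl : ∀ a, ¬ lt a a
  trans : ∀ a b c, lt a b → lt b c → lt a c
  trichotomous : ∀ a b, lt a b ∨ a = b ∨ lt b a
  wf : WellFounded lt
  add_right : ∀ a b c, lt a b → lt (a + c) (b + c)

variable {n : ℕ}

/-- `α` is the exponent vector of the `t`-leading term of `f`. -/
def TermOrder.IsLeadExp {k : Type*} [CommSemiring k] (t : TermOrder n)
    (f : MvPolynomial (Fin n) k) (α : Fin n →₀ ℕ) : Prop :=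
  α ∈ f.support ∧ ∀ β ∈ f.support, β ≠ α → t.lt β α

open Classical in
/-- The exponent vector of the `t`-leading term of `f` (junk value `0` if none exists). -/
noncomputable def TermOrder.leadExp {k : Type*} [CommSemiring k] (t : TermOrder n)
    (f : MvPolynomial (Fin n) k) : Fin n →₀ ℕ :=
  if h : ∃ α, t.IsLeadExp f α then h.choose else 0

/-- The leading term `in_t(f)` of `f` with respect to the term ordering `t`. -/
noncomputable def TermOrder.leadTerm {k : Type*} [CommSemiring k] (t : TermOrder n)
    (f : MvPolynomial (Fin n) k) : MvPolynomial (Fin n) k :=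
  monomial (t.leadExp f) (coeff (t.leadExp f) f)

/-- The initial ideal `in_t(I)` of `I` with respect to the term ordering `t`. -/
noncomputable def initialIdealT {k : Type*} [CommSemiring k] (t : TermOrder n)
    (I : Ideal (MvPolynomial (Fin n) k)) : Ideal (MvPolynomial (Fin n) k) :=
  Ideal.span { p | ∃ f ∈ I, f ≠ 0 ∧ p = t.leadTerm f }

/-- The `ω`-weight `⟨ω, α⟩` of an exponent vector `α`. -/
noncomputable def wt (ω : Fin n → ℝ) (α : Fin n →₀ ℕ) : ℝ :=
  ∑ i, ω i * (α i : ℝ)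

/-- The initial form `in_ω(f)`: the sum of the terms of `f` of maximal `ω`-weight. -/
noncomputable def initialForm {k : Type*} [CommSemiring k] (ω : Fin n → ℝ)
    (f : MvPolynomial (Fin n) k) : MvPolynomial (Fin n) k :=
  ∑ α ∈ f.support.filter (fun α => ∀ β ∈ f.support, wt ω β ≤ wt ω α),
    monomial α (coeff α f)

/-- The generalized initial ideal `in_ω(I)` of `I` with respect to the weight vector `ω`. -/
noncomputable def initialIdealW {k : Type*} [CommSemiring k] (ω : Fin n → ℝ)
    (I : Ideal (MvPolynomial (Fin n) k)) : Ideal (MvPolynomial (Fin n) k) :=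
  Ideal.span { p | ∃ f ∈ I, f ≠ 0 ∧ p = initialForm ω f }

/-- The refinement `<_ω` of the weight vector `ω` by the term ordering `t`:
compare first by `ω`-weight, break ties with `t`. -/
def refineLt (ω : Fin n → ℝ) (t : TermOrder n) (α β : Fin n →₀ ℕ) : Prop :=
  wt ω α < wt ω β ∨ (wt ω α = wt ω β ∧ t.lt α β)

/-- `G` is a Gröbner basis of `I` w.r.t. `t`: `G ⊆ I` and the leading terms of the
elements of `G` generate the initial ideal `in_t(I)`. -/
def IsGroebnerBasis {k : Type*} [CommSemiring k] (t : TermOrder n)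
    (I : Ideal (MvPolynomial (Fin n) k)) (G : Finset (MvPolynomial (Fin n) k)) : Prop :=
  (∀ g ∈ G, g ∈ I) ∧
    Ideal.span ((fun g => t.leadTerm g) '' (G : Set (MvPolynomial (Fin n) k)))
      = initialIdealT t I

open Classical in
/-- `G` is the reduced (marked) Gröbner basis of `I` w.r.t. `t`:
a Gröbner basis that is minimal, monic and reduced. -/
def IsReducedGB {k : Type*} [CommSemiring k] (t : TermOrder n)
    (I : Ideal (MvPolynomial (Fin n) k)) (G : Finset (MvPolynomial (Fin n) k)) : Prop :=
  IsGroebnerBasis t I G ∧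
  (∀ g ∈ G, coeff (t.leadExp g) g = 1) ∧
  (∀ g ∈ G, ∀ g' ∈ G, g ≠ g' → ∀ α ∈ g.support, ¬ t.leadExp g' ≤ α) ∧
  (∀ g ∈ G, ¬ IsGroebnerBasis t I (G.erase g))

/-!
For `g ∈ G` the cone condition puts the `t`-leading exponent of `g` in top `ω`-weight, so
`in_t(in_ω g) = in_t(g)`; for the same reason, dividing `f ∈ I` by `G` with respect to `t` never
touches the top-weight part of `f`, so some `in_t(g)` divides `in_t(in_ω f)`. On the other side,
`in_ω(I)` is spanned by `ω`-homogeneous elements, and every nonzero `ω`-homogeneous component of an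
element `h ∈ in_ω(I)` is again an initial form `in_ω f` with `f ∈ I`. Applied to the component of
`h` carrying its `t`-leading term, this gives `in_t(h) ∈ ⟨in_t(g) : g ∈ G⟩`.
-/

namespace TermOrder

variable (t : TermOrder n)

theorem exists_max_of_nonempty {s : Finset (Fin n →₀ ℕ)} (hs : s.Nonempty) :
    ∃ α ∈ s, ∀ β ∈ s, β ≠ α → t.lt β α := by
  induction hs using Finset.Nonempty.cons_induction with
  | singleton a => exact ⟨a, by simp, by simp⟩
  | cons a s ha hs ih =>
    obtain ⟨m, hm, hmax⟩ := ih
    rcases t.trichotomous a m with h | rfl | h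
    · refine ⟨m, Finset.mem_cons_of_mem hm, fun β hβ hne => ?_⟩
      obtain rfl | hβ := Finset.mem_cons.1 hβ
      exacts [h, hmax β hβ hne]
    · exact absurd hm ha
    · refine ⟨a, Finset.mem_cons_self a s, fun β hβ hne => ?_⟩
      obtain rfl | hβ := Finset.mem_cons.1 hβ
      · exact absurd rfl hne
      obtain rfl | hβm := eq_or_ne β m
      exacts [h, t.trans _ _ _ (hmax β hβ hβm) h]

variable {k : Type*} [CommSemiring k]

theorem leadExp_eq {f : MvPolynomial (Fin n) k} {α : Fin n →₀ ℕ} (h : t.IsLeadExp f α) :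
    t.leadExp f = α := by
  classical
  have hex : ∃ α, t.IsLeadExp f α := ⟨α, h⟩
  rw [leadExp, dif_pos hex]
  by_contra hne
  exact t.irrefl α
    (t.trans _ _ _ (hex.choose_spec.2 α h.1 (Ne.symm hne)) (h.2 _ hex.choose_spec.1 hne))

theorem isLeadExp_leadExp {f : MvPolynomial (Fin n) k} (hf : f ≠ 0) :
    t.IsLeadExp f (t.leadExp f) := by
  obtain ⟨α, hα, hmax⟩ := t.exists_max_of_nonempty (support_nonempty.2 hf)
  rw [t.leadExp_eq ⟨hα, hmax⟩]
  exact ⟨hα, hmax⟩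

theorem leadExp_mem_support {f : MvPolynomial (Fin n) k} (hf : f ≠ 0) :
    t.leadExp f ∈ f.support :=
  (t.isLeadExp_leadExp hf).1

theorem leadExp_eq_of_support_subset {p f : MvPolynomial (Fin n) k}
    (hsub : p.support ⊆ f.support) (hmem : t.leadExp f ∈ p.support) :
    t.leadExp p = t.leadExp f := by
  have hf : f ≠ 0 := support_nonempty.1 ⟨_, hsub hmem⟩
  exact t.leadExp_eq ⟨hmem, fun β hβ hne => (t.isLeadExp_leadExp hf).2 β (hsub hβ) hne⟩

theorem leadTerm_mem_span_monomial_iff {f : MvPolynomial (Fin n) k} (hf : f ≠ 0)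
    {s : Set (Fin n →₀ ℕ)} :
    t.leadTerm f ∈ Ideal.span ((fun α => monomial α (1 : k)) '' s) ↔
      ∃ α ∈ s, α ≤ t.leadExp f := by
  classical
  rw [mem_ideal_span_monomial_image, leadTerm,
    support_monomial, if_neg (mem_support_iff.1 (t.leadExp_mem_support hf))]
  simp

theorem span_leadTerm_eq_span_monomial {G : Set (MvPolynomial (Fin n) k)}
    (hmonic : ∀ g ∈ G, coeff (t.leadExp g) g = 1) :
    Ideal.span ((fun g => t.leadTerm g) '' G) =
      Ideal.span ((fun α => monomial α (1 : k)) '' (t.leadExp '' G)) := by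
  rw [Set.image_image]
  congr 1
  exact Set.image_congr fun g hg => by rw [leadTerm, hmonic g hg]

end TermOrder

theorem mem_support_monomial_mul {σ R : Type*} [CommSemiring R] {α β : σ →₀ ℕ} {c : R}
    {p : MvPolynomial σ R} (h : β ∈ (monomial α c * p).support) : ∃ γ ∈ p.support, β = α + γ := by
  rw [mem_support_iff, coeff_monomial_mul'] at h
  split_ifs at h with hαβ
  · exact ⟨β - α, mem_support_iff.2 (right_ne_zero_of_mul h), (add_tsub_cancel_of_le hαβ).symm⟩
  · exact absurd rfl h

theorem weightedHomogeneousComponent_monomial_mul {σ M R : Type*} [CommSemiring R]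
    [AddCommGroup M] (w : σ → M) (α : σ →₀ ℕ) (c : R) (m : M) (p : MvPolynomial σ R) :
    weightedHomogeneousComponent w m (monomial α c * p) =
      monomial α c * weightedHomogeneousComponent w (m - Finsupp.weight w α) p := by
  classical
  ext β
  simp only [coeff_weightedHomogeneousComponent, coeff_monomial_mul']
  by_cases h : α ≤ β
  · obtain ⟨γ, rfl⟩ := le_iff_exists_add.1 h
    simp only [map_add, add_tsub_cancel_left, if_pos h, eq_sub_iff_add_eq']
    split_ifs <;> simp
  · simp [h]

theorem weight_eq_wt (ω : Fin n → ℝ) (α : Fin n →₀ ℕ) : Finsupp.weight ω α = wt ω α := by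
  rw [Finsupp.weight_apply, Finsupp.sum_fintype _ _ (by simp), wt]
  simp [mul_comm]

theorem wt_add (ω : Fin n → ℝ) (α β : Fin n →₀ ℕ) : wt ω (α + β) = wt ω α + wt ω β := by
  simp only [← weight_eq_wt, map_add]

section InitialForm

variable {k : Type*} [CommSemiring k] (ω : Fin n → ℝ)

theorem initialForm_eq_component_of_isMax {f : MvPolynomial (Fin n) k} {α : Fin n →₀ ℕ}
    (hα : α ∈ f.support) (hmax : ∀ β ∈ f.support, wt ω β ≤ wt ω α) :
    initialForm ω f = weightedHomogeneousComponent ω (wt ω α) f := by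
  classical
  rw [initialForm, weightedHomogeneousComponent_apply]
  refine Finset.sum_congr (Finset.filter_congr fun β hβ => ?_) fun _ _ => rfl
  rw [weight_eq_wt]
  exact ⟨fun h => le_antisymm (hmax β hβ) (h α hα), fun h γ hγ => h ▸ hmax γ hγ⟩

theorem initialForm_eq_component {f : MvPolynomial (Fin n) k} {d : ℝ}
    (hle : ∀ β ∈ f.support, wt ω β ≤ d) (hne : weightedHomogeneousComponent ω d f ≠ 0) :
    initialForm ω f = weightedHomogeneousComponent ω d f := by
  classical
  obtain ⟨α, hα⟩ := support_nonempty.2 hne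
  rw [support_weightedHomogeneousComponent, Finset.mem_filter, weight_eq_wt] at hα
  rw [initialForm_eq_component_of_isMax ω hα.1 (hα.2 ▸ hle), hα.2]

theorem exists_initialForm_eq_component {f : MvPolynomial (Fin n) k} (hf : f ≠ 0) :
    ∃ α ∈ f.support, (∀ β ∈ f.support, wt ω β ≤ wt ω α) ∧
      initialForm ω f = weightedHomogeneousComponent ω (wt ω α) f := by
  obtain ⟨α, hα, hmax⟩ := f.support.exists_max_image (wt ω) (support_nonempty.2 hf)
  exact ⟨α, hα, hmax, initialForm_eq_component_of_isMax ω hα hmax⟩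

theorem initialForm_ne_zero {f : MvPolynomial (Fin n) k} (hf : f ≠ 0) :
    initialForm ω f ≠ 0 := by
  classical
  obtain ⟨α, hα, -, heq⟩ := exists_initialForm_eq_component ω hf
  rw [heq, ← support_nonempty]
  exact ⟨α, by simp [support_weightedHomogeneousComponent, hα, weight_eq_wt]⟩

namespace TermOrder

variable (t : TermOrder n)

theorem leadExp_mem_support_component {f : MvPolynomial (Fin n) k} (hf : f ≠ 0) :
    t.leadExp f ∈ (weightedHomogeneousComponent ω (wt ω (t.leadExp f)) f).support := by
  classical
  simp [support_weightedHomogeneousComponent, t.leadExp_mem_support hf, weight_eq_wt]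

theorem leadExp_component {f : MvPolynomial (Fin n) k} (hf : f ≠ 0) :
    t.leadExp (weightedHomogeneousComponent ω (wt ω (t.leadExp f)) f) = t.leadExp f := by
  classical
  exact t.leadExp_eq_of_support_subset (by simp [support_weightedHomogeneousComponent])
    (t.leadExp_mem_support_component ω hf)

theorem leadExp_initialForm {f : MvPolynomial (Fin n) k} (hf : f ≠ 0)
    (hmax : ∀ β ∈ f.support, wt ω β ≤ wt ω (t.leadExp f)) :
    t.leadExp (initialForm ω f) = t.leadExp f := by
  rw [initialForm_eq_component_of_isMax ω (t.leadExp_mem_support hf) hmax,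
    t.leadExp_component ω hf]

theorem leadTerm_initialForm {f : MvPolynomial (Fin n) k} (hf : f ≠ 0)
    (hmax : ∀ β ∈ f.support, wt ω β ≤ wt ω (t.leadExp f)) :
    t.leadTerm (initialForm ω f) = t.leadTerm f := by
  classical
  rw [leadTerm, leadTerm, t.leadExp_initialForm ω hf hmax,
    initialForm_eq_component_of_isMax ω (t.leadExp_mem_support hf) hmax,
    coeff_weightedHomogeneousComponent, if_pos (weight_eq_wt _ _)]

end TermOrder

end InitialForm

theorem initialForm_sub_of_wt_lt {k : Type*} [CommRing k] (ω : Fin n → ℝ)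
    {f q : MvPolynomial (Fin n) k} {d : ℝ} (hle : ∀ β ∈ f.support, wt ω β ≤ d)
    (hne : weightedHomogeneousComponent ω d f ≠ 0) (hq : ∀ β ∈ q.support, wt ω β < d) :
    initialForm ω (f - q) = initialForm ω f := by
  classical
  have hq0 : weightedHomogeneousComponent ω d q = 0 :=
    weightedHomogeneousComponent_eq_zero' _ _ fun β hβ => by
      rw [weight_eq_wt]; exact (hq β hβ).ne
  have hcomp : weightedHomogeneousComponent ω d (f - q) = weightedHomogeneousComponent ω d f := by
    rw [map_sub, hq0, sub_zero]
  have hle' : ∀ β ∈ (f - q).support, wt ω β ≤ d := fun β hβ =>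
    (Finset.mem_union.1 (support_sub _ f q hβ)).elim (hle β) fun h => (hq β h).le
  rw [initialForm_eq_component ω hle' (hcomp ▸ hne), hcomp, initialForm_eq_component ω hle hne]

section TopComponents

variable {k : Type*} [CommSemiring k] (ω : Fin n → ℝ) (I : Ideal (MvPolynomial (Fin n) k))

/-- The initial forms of weight `d` of elements of `I`, together with `0`, presented as a linear
image so that they visibly form a submodule. -/
noncomputable def topComponents (d : ℝ) : Submodule k (MvPolynomial (Fin n) k) :=
  (I.restrictScalars k ⊓ restrictSupport k {α | wt ω α ≤ d}).map
    (weightedHomogeneousComponent ω d)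

theorem component_mem_topComponents {f : MvPolynomial (Fin n) k} {d : ℝ} (hfI : f ∈ I)
    (hle : ∀ β ∈ f.support, wt ω β ≤ d) :
    weightedHomogeneousComponent ω d f ∈ topComponents ω I d :=
  Submodule.mem_map_of_mem ⟨hfI, hle⟩

theorem exists_initialForm_eq_of_mem_topComponents {p : MvPolynomial (Fin n) k} {d : ℝ}
    (hp : p ∈ topComponents ω I d) (hp0 : p ≠ 0) : ∃ f ∈ I, f ≠ 0 ∧ initialForm ω f = p := by
  obtain ⟨f, ⟨hfI, hle⟩, rfl⟩ := hp
  exact ⟨f, hfI, fun h => hp0 (by rw [h, map_zero]), initialForm_eq_component ω hle hp0⟩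

theorem monomial_mul_mem_topComponents {p : MvPolynomial (Fin n) k} {d : ℝ} (α : Fin n →₀ ℕ)
    (c : k) (hp : p ∈ topComponents ω I (d - wt ω α)) :
    monomial α c * p ∈ topComponents ω I d := by
  obtain ⟨f, ⟨hfI, hle⟩, rfl⟩ := hp
  rw [← weight_eq_wt, ← weightedHomogeneousComponent_monomial_mul]
  refine component_mem_topComponents ω I (I.mul_mem_left _ hfI) fun β hβ => ?_
  obtain ⟨γ, hγ, rfl⟩ := mem_support_monomial_mul hβ
  have : wt ω γ ≤ d - wt ω α := hle hγ
  rw [wt_add]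
  linarith

theorem component_mem_topComponents_of_mem_initialIdealW {h : MvPolynomial (Fin n) k}
    (hh : h ∈ initialIdealW ω I) (d : ℝ) :
    weightedHomogeneousComponent ω d h ∈ topComponents ω I d := by
  classical
  induction hh using Submodule.span_induction generalizing d with
  | mem x hx =>
    obtain ⟨f, hfI, hf0, rfl⟩ := hx
    obtain ⟨α, -, hmax, heq⟩ := exists_initialForm_eq_component ω hf0
    rw [heq, weightedHomogeneousComponent_of_mem (weightedHomogeneousComponent_mem _ _ _)]
    split_ifs with hd
    · rw [hd]
      exact component_mem_topComponents ω I hfI hmax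
    · exact zero_mem _
  | zero => simp
  | add x y _ _ hx hy => simpa only [map_add] using add_mem (hx d) (hy d)
  | smul r x _ hx =>
    rw [smul_eq_mul, r.as_sum, Finset.sum_mul, map_sum]
    refine Submodule.sum_mem _ fun α _ => ?_
    rw [weightedHomogeneousComponent_monomial_mul, weight_eq_wt]
    exact monomial_mul_mem_topComponents ω I α _ (hx _)

theorem exists_initialForm_eq_component_of_mem_initialIdealW {h : MvPolynomial (Fin n) k}
    (hh : h ∈ initialIdealW ω I) {d : ℝ} (hne : weightedHomogeneousComponent ω d h ≠ 0) :
    ∃ f ∈ I, f ≠ 0 ∧ initialForm ω f = weightedHomogeneousComponent ω d h :=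
  exists_initialForm_eq_of_mem_topComponents ω I
    (component_mem_topComponents_of_mem_initialIdealW ω I hh d) hne

end TopComponents

theorem TermOrder.exists_leadExp_le_of_isGroebnerBasis {k : Type*} [CommSemiring k]
    (t : TermOrder n) {I : Ideal (MvPolynomial (Fin n) k)} {G : Finset (MvPolynomial (Fin n) k)}
    (hG : IsGroebnerBasis t I G) (hmonic : ∀ g ∈ G, coeff (t.leadExp g) g = 1)
    {f : MvPolynomial (Fin n) k} (hfI : f ∈ I) (hf : f ≠ 0) :
    ∃ g ∈ G, t.leadExp g ≤ t.leadExp f := by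
  have hmem : t.leadTerm f ∈ initialIdealT t I := Ideal.subset_span ⟨f, hfI, hf, rfl⟩
  rw [← hG.2, t.span_leadTerm_eq_span_monomial hmonic, t.leadTerm_mem_span_monomial_iff hf] at hmem
  obtain ⟨_, ⟨g, hg, rfl⟩, hle⟩ := hmem
  exact ⟨g, hg, hle⟩

namespace TermOrder

variable {k : Type*} [CommRing k] (t : TermOrder n)

theorem lt_leadExp_of_mem_support_sub {f g : MvPolynomial (Fin n) k} (hf : f ≠ 0)
    (hg : coeff (t.leadExp g) g = 1) (hle : t.leadExp g ≤ t.leadExp f) {β : Fin n →₀ ℕ}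
    (hβ : β ∈ (f - monomial (t.leadExp f - t.leadExp g) (coeff (t.leadExp f) f) * g).support) :
    t.lt β (t.leadExp f) := by
  classical
  have hβ_ne : β ≠ t.leadExp f := by
    rintro rfl
    simp [coeff_monomial_mul', tsub_tsub_cancel_of_le hle, hg] at hβ
  rcases Finset.mem_union.1 (support_sub _ _ _ hβ) with h | h
  · exact (t.isLeadExp_leadExp hf).2 β h hβ_ne
  · obtain ⟨γ, hγ, rfl⟩ := mem_support_monomial_mul h
    have hγ_ne : γ ≠ t.leadExp g := by
      rintro rfl
      exact hβ_ne (tsub_add_cancel_of_le hle)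
    have := t.add_right _ _ (t.leadExp f - t.leadExp g)
      ((t.isLeadExp_leadExp (support_nonempty.1 ⟨γ, hγ⟩)).2 γ hγ hγ_ne)
    rwa [add_comm γ, add_tsub_cancel_of_le hle] at this

/-- While the `t`-leading exponent of `f` is not of top `ω`-weight, reducing `f` by `G` lowers
`in_t f` and, by the cone condition, leaves `in_ω f` unchanged; once it is of top weight,
`in_t (in_ω f) = in_t f`. -/
theorem exists_leadExp_le_leadExp_initialForm (ω : Fin n → ℝ) {I : Ideal (MvPolynomial (Fin n) k)}
    {G : Finset (MvPolynomial (Fin n) k)} (hG : IsGroebnerBasis t I G)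
    (hmonic : ∀ g ∈ G, coeff (t.leadExp g) g = 1)
    (hcone : ∀ g ∈ G, ∀ β ∈ g.support, wt ω β ≤ wt ω (t.leadExp g))
    {f : MvPolynomial (Fin n) k} (hfI : f ∈ I) (hf : f ≠ 0) :
    ∃ g ∈ G, t.leadExp g ≤ t.leadExp (initialForm ω f) := by
  induction f using (InvImage.wf t.leadExp t.wf).induction with
  | h f ih =>
  obtain ⟨g, hg, hle⟩ := t.exists_leadExp_le_of_isGroebnerBasis hG hmonic hfI hf
  by_cases htop : ∀ β ∈ f.support, wt ω β ≤ wt ω (t.leadExp f)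
  · exact ⟨g, hg, (t.leadExp_initialForm ω hf htop).symm ▸ hle⟩
  push Not at htop
  obtain ⟨β₀, hβ₀, hlt₀⟩ := htop
  obtain ⟨α, -, hmax, heq⟩ := exists_initialForm_eq_component ω hf
  set q := monomial (t.leadExp f - t.leadExp g) (coeff (t.leadExp f) f) * g
  have hq : ∀ β ∈ q.support, wt ω β < wt ω α := by
    intro β hβ
    obtain ⟨γ, hγ, rfl⟩ := mem_support_monomial_mul hβ
    calc wt ω (t.leadExp f - t.leadExp g + γ)
        ≤ wt ω (t.leadExp f - t.leadExp g + t.leadExp g) := by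
          simpa only [wt_add, add_le_add_iff_left] using hcone g hg γ hγ
      _ = wt ω (t.leadExp f) := by rw [tsub_add_cancel_of_le hle]
      _ < wt ω α := hlt₀.trans_le (hmax β₀ hβ₀)
  have hin : initialForm ω (f - q) = initialForm ω f :=
    initialForm_sub_of_wt_lt ω hmax (heq ▸ initialForm_ne_zero ω hf) hq
  have hne : f - q ≠ 0 := by
    intro h
    apply initialForm_ne_zero ω hf
    rw [← hin, h]
    simp [initialForm]
  obtain ⟨g', hg', hle'⟩ :=
    ih (f - q) (t.lt_leadExp_of_mem_support_sub hf (hmonic g hg) hle (t.leadExp_mem_support hne))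
      (I.sub_mem hfI (I.mul_mem_left _ (hG.1 g hg))) hne
  exact ⟨g', hg', hin ▸ hle'⟩

end TermOrder

theorem initialForms_give_GB_general {k : Type*} [Field k] (t : TermOrder n)
    (I : Ideal (MvPolynomial (Fin n) k)) (G : Finset (MvPolynomial (Fin n) k))
    (hG : IsReducedGB t I G)
    (ωr : Fin n → ℝ)
    (hcone : ∀ g ∈ G, ∀ β ∈ g.support, wt ωr β ≤ wt ωr (t.leadExp g)) :
    (∀ g ∈ G, initialForm ωr g ∈ initialIdealW ωr I) ∧
    Ideal.span ((fun g => t.leadTerm (initialForm ωr g)) ''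
        (G : Set (MvPolynomial (Fin n) k)))
      = initialIdealT t (initialIdealW ωr I) ∧
    ∀ g ∈ G, t.leadTerm (initialForm ωr g) = t.leadTerm g := by
  obtain ⟨hGB, hmonic, -, -⟩ := hG
  have hG0 : ∀ g ∈ G, g ≠ 0 := fun g hg h => by simpa [h] using hmonic g hg
  have hlead : ∀ g ∈ G, t.leadTerm (initialForm ωr g) = t.leadTerm g := fun g hg =>
    t.leadTerm_initialForm ωr (hG0 g hg) (hcone g hg)
  have hmem : ∀ g ∈ G, initialForm ωr g ∈ initialIdealW ωr I := fun g hg =>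
    Ideal.subset_span ⟨g, hGB.1 g hg, hG0 g hg, rfl⟩
  refine ⟨hmem, le_antisymm ?_ ?_, hlead⟩
  · rw [Ideal.span_le]
    rintro _ ⟨g, hg, rfl⟩
    exact Ideal.subset_span ⟨_, hmem g hg, initialForm_ne_zero ωr (hG0 g hg), rfl⟩
  · rw [Set.image_congr hlead, t.span_leadTerm_eq_span_monomial hmonic, initialIdealT,
      Ideal.span_le]
    rintro _ ⟨h, hh, hh0, rfl⟩
    obtain ⟨f, hfI, hf0, hf⟩ := exists_initialForm_eq_component_of_mem_initialIdealW ωr I hh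
      (support_nonempty.1 ⟨_, t.leadExp_mem_support_component ωr hh0⟩)
    obtain ⟨g, hg, hle⟩ := t.exists_leadExp_le_leadExp_initialForm ωr hGB hmonic hcone hfI hf0
    rw [hf, t.leadExp_component ωr hh0] at hle
    exact (t.leadTerm_mem_span_monomial_iff hh0).2 ⟨_, ⟨g, hg, rfl⟩, hle⟩

/-- If `G` is a marked Gröbner basis of `I` w.r.t. `t` and the rational
weight vector `ω` lies in the closed Gröbner cone of `t` (weak inequalities on each
`g ∈ G`), then `in_ω(G)` is a Gröbner basis of `in_ω(I)` w.r.t. `t`, with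
`in_t(in_ω(g)) = in_t(g)` for each `g ∈ G`. -/
theorem initialForms_give_GB {k : Type*} [Field k] (t : TermOrder n)
    (I : Ideal (MvPolynomial (Fin n) k)) (G : Finset (MvPolynomial (Fin n) k))
    (hG : IsReducedGB t I G)
    (ω : Fin n → ℚ) (hω : ∀ i, 0 ≤ ω i)
    (ωr : Fin n → ℝ) (hωr : ωr = fun i => (ω i : ℝ))
    (hcone : ∀ g ∈ G, ∀ β ∈ g.support, wt ωr β ≤ wt ωr (t.leadExp g)) :
    (∀ g ∈ G, initialForm ωr g ∈ initialIdealW ωr I) ∧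
    Ideal.span ((fun g => t.leadTerm (initialForm ωr g)) ''
        (G : Set (MvPolynomial (Fin n) k)))
      = initialIdealT t (initialIdealW ωr I) ∧
    ∀ g ∈ G, t.leadTerm (initialForm ωr g) = t.leadTerm g :=
  initialForms_give_GB_general t I G hG ωr hcone
end

section
/- If the generalized initial ideal in_ω(I) is a monomial ideal for some ω ∈ ℝ^n_{≥0}, then for every term ordering <, in_{<_ω}(I) = in_ω(I), where <_ω is the refinement of ω by <. -/
open MvPolynomial

variable {n : ℕ}

/-!
A monomial ideal contains every term of each of its elements, and the `<_ω`-leading term of `f` is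
the `<`-leading term of `in_ω(f)`; this gives `in_{<_ω}(I) ⊆ in_ω(I)`. Conversely, the property
"for every `d`, the weight-`d` component of `h` is the weight-`d` component of some `g ∈ I` all of
whose terms have weight `≤ d`" holds for the generators `in_ω(f)` and is preserved by sums and by
multiplication with monomials, so it holds on all of `in_ω(I)`. Applied to a monomial generator
`x^s` of `in_ω(I)` it yields `g ∈ I` with `in_ω(g) = x^s`, whose `<_ω`-leading term is `x^s`.
-/

open Finsupp (weight weight_apply)

section WeightedInitialForms

variable {k : Type*} [CommSemiring k] {ω : Fin n → ℝ}

lemma wt_eq_weight (ω : Fin n → ℝ) (α : Fin n →₀ ℕ) : wt ω α = weight ω α := by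
  simp [wt, weight_apply, Finsupp.sum_fintype, mul_comm]

lemma coeff_initialForm (ω : Fin n → ℝ) (f : MvPolynomial (Fin n) k) (β : Fin n →₀ ℕ) :
    coeff β (initialForm ω f) =
      if ∀ γ ∈ f.support, weight ω γ ≤ weight ω β then coeff β f else 0 := by
  classical
  simp only [initialForm, wt_eq_weight, coeff_sum, coeff_monomial, Finset.sum_ite_eq',
    Finset.mem_filter, MvPolynomial.mem_support_iff]
  by_cases hβ : coeff β f = 0 <;> simp [hβ]

lemma weightedHomogeneousComponent_initialForm_of_le {f : MvPolynomial (Fin n) k} {d : ℝ}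
    (hle : ∀ β ∈ f.support, weight ω β ≤ d) :
    weightedHomogeneousComponent ω d (initialForm ω f) = weightedHomogeneousComponent ω d f := by
  ext β
  simp only [coeff_weightedHomogeneousComponent, coeff_initialForm]
  split_ifs with hβ hmax <;> first | rfl | exact absurd (fun γ hγ => hβ ▸ hle γ hγ) hmax

lemma weightedHomogeneousComponent_initialForm_of_lt {f : MvPolynomial (Fin n) k} {d : ℝ}
    {β : Fin n →₀ ℕ} (hβ : β ∈ f.support) (hd : d < weight ω β) :
    weightedHomogeneousComponent ω d (initialForm ω f) = 0 := by
  ext γ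
  simp only [coeff_weightedHomogeneousComponent, coeff_initialForm, coeff_zero]
  split_ifs with hγ hmax
  · exact absurd (hmax β hβ) (by linarith)
  all_goals rfl

lemma initialForm_eq_weightedHomogeneousComponent {f : MvPolynomial (Fin n) k} {d : ℝ}
    (hle : ∀ β ∈ f.support, weight ω β ≤ d) (hne : weightedHomogeneousComponent ω d f ≠ 0) :
    initialForm ω f = weightedHomogeneousComponent ω d f := by
  obtain ⟨β₀, hβ₀⟩ := ne_zero_iff.1 hne
  rw [coeff_weightedHomogeneousComponent] at hβ₀
  have hβ₀d : weight ω β₀ = d := by by_contra h; exact hβ₀ (if_neg h)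
  have hβ₀f : β₀ ∈ f.support := MvPolynomial.mem_support_iff.2 (by rwa [if_pos hβ₀d] at hβ₀)
  ext β
  rw [coeff_initialForm, coeff_weightedHomogeneousComponent]
  by_cases hβ : β ∈ f.support
  · have : (∀ γ ∈ f.support, weight ω γ ≤ weight ω β) ↔ weight ω β = d :=
      ⟨fun h => le_antisymm (hle β hβ) (hβ₀d ▸ h β₀ hβ₀f), fun h γ hγ => h ▸ hle γ hγ⟩
    simp only [this]
  · simp only [MvPolynomial.notMem_support_iff.1 hβ, ite_self]

lemma weightedHomogeneousComponent_monomial_mul_s19 (u : Fin n →₀ ℕ) (c : k)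
    (g : MvPolynomial (Fin n) k) (d : ℝ) :
    weightedHomogeneousComponent ω d (monomial u c * g) =
      monomial u c * weightedHomogeneousComponent ω (d - weight ω u) g := by
  ext β
  simp only [coeff_weightedHomogeneousComponent, coeff_monomial_mul']
  by_cases hu : u ≤ β
  · have hsplit : weight ω β = weight ω u + weight ω (β - u) := by
      rw [← map_add, add_tsub_cancel_of_le hu]
    have hiff : weight ω β = d ↔ weight ω (β - u) = d - weight ω u := by
      constructor <;> intro <;> linarith
    simp only [hu, if_true, hiff]
    split_ifs <;> simp
  · simp [hu]

end WeightedInitialForms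

section InitialLifts

variable {k : Type*} [CommSemiring k] {ω : Fin n → ℝ} {I : Ideal (MvPolynomial (Fin n) k)}

def HasInitialLifts (ω : Fin n → ℝ) (I : Ideal (MvPolynomial (Fin n) k))
    (h : MvPolynomial (Fin n) k) : Prop :=
  ∀ d : ℝ, ∃ g ∈ I, (∀ β ∈ g.support, weight ω β ≤ d) ∧
    weightedHomogeneousComponent ω d g = weightedHomogeneousComponent ω d h

lemma hasInitialLifts_zero : HasInitialLifts ω I 0 :=
  fun _ => ⟨0, I.zero_mem, by simp, rfl⟩

lemma HasInitialLifts.add {h₁ h₂ : MvPolynomial (Fin n) k} (h₁I : HasInitialLifts ω I h₁)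
    (h₂I : HasInitialLifts ω I h₂) : HasInitialLifts ω I (h₁ + h₂) := by
  intro d
  obtain ⟨g₁, hg₁I, hg₁, hc₁⟩ := h₁I d
  obtain ⟨g₂, hg₂I, hg₂, hc₂⟩ := h₂I d
  refine ⟨g₁ + g₂, I.add_mem hg₁I hg₂I, fun β hβ => ?_, by simp only [map_add, hc₁, hc₂]⟩
  rcases Finset.mem_union.1 (support_add hβ) with hβ | hβ
  exacts [hg₁ β hβ, hg₂ β hβ]

lemma HasInitialLifts.monomial_mul {h : MvPolynomial (Fin n) k} (hI : HasInitialLifts ω I h)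
    (u : Fin n →₀ ℕ) (c : k) : HasInitialLifts ω I (monomial u c * h) := by
  intro d
  obtain ⟨g, hgI, hg, hc⟩ := hI (d - weight ω u)
  refine ⟨monomial u c * g, I.mul_mem_left _ hgI, fun β hβ => ?_, by
    simp only [weightedHomogeneousComponent_monomial_mul_s19, hc]⟩
  rw [MvPolynomial.mem_support_iff, coeff_monomial_mul'] at hβ
  split_ifs at hβ with hu
  · have hβu := hg (β - u) (MvPolynomial.mem_support_iff.2 (right_ne_zero_of_mul hβ))
    rw [← add_tsub_cancel_of_le hu, map_add]
    linarith
  · exact absurd rfl hβ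

lemma HasInitialLifts.mul_left {h : MvPolynomial (Fin n) k} (hI : HasInitialLifts ω I h)
    (a : MvPolynomial (Fin n) k) : HasInitialLifts ω I (a * h) := by
  induction a using MvPolynomial.induction_on' with
  | monomial u c => exact hI.monomial_mul u c
  | add a₁ a₂ ha₁ ha₂ => simpa only [add_mul] using ha₁.add ha₂

lemma hasInitialLifts_initialForm {f : MvPolynomial (Fin n) k} (hf : f ∈ I) :
    HasInitialLifts ω I (initialForm ω f) := by
  intro d
  by_cases hle : ∀ β ∈ f.support, weight ω β ≤ d
  · exact ⟨f, hf, hle, (weightedHomogeneousComponent_initialForm_of_le hle).symm⟩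
  · push Not at hle
    obtain ⟨β, hβ, hd⟩ := hle
    exact ⟨0, I.zero_mem, by simp,
      by rw [weightedHomogeneousComponent_initialForm_of_lt hβ hd, map_zero]⟩

lemma hasInitialLifts_of_mem_initialIdealW {h : MvPolynomial (Fin n) k}
    (hh : h ∈ initialIdealW ω I) : HasInitialLifts ω I h := by
  induction hh using Submodule.span_induction with
  | mem _ hp =>
    obtain ⟨f, hf, -, rfl⟩ := hp
    exact hasInitialLifts_initialForm hf
  | zero => exact hasInitialLifts_zero
  | add _ _ _ _ h₁ h₂ => exact h₁.add h₂
  | smul a _ _ hI => exact hI.mul_left a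

lemma exists_initialForm_eq_of_mem_initialIdealW {h : MvPolynomial (Fin n) k} {d : ℝ}
    (hh : h ∈ initialIdealW ω I) (hhom : h.IsWeightedHomogeneous ω d) (h0 : h ≠ 0) :
    ∃ g ∈ I, g ≠ 0 ∧ initialForm ω g = h := by
  obtain ⟨g, hgI, hg, hc⟩ := hasInitialLifts_of_mem_initialIdealW hh d
  rw [weightedHomogeneousComponent_eq_self hhom] at hc
  refine ⟨g, hgI, ?_, ?_⟩
  · rintro rfl
    exact h0 (by rw [← hc, map_zero])
  · rw [initialForm_eq_weightedHomogeneousComponent hg (hc ▸ h0), hc]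

end InitialLifts

section TermOrders

variable {k : Type*} [CommSemiring k]

lemma mem_support_initialForm {ω : Fin n → ℝ} {f : MvPolynomial (Fin n) k}
    {β : Fin n →₀ ℕ} :
    β ∈ (initialForm ω f).support ↔
      β ∈ f.support ∧ ∀ γ ∈ f.support, weight ω γ ≤ weight ω β := by
  rw [MvPolynomial.mem_support_iff, coeff_initialForm, MvPolynomial.mem_support_iff]
  split_ifs with h
  · exact (and_iff_left h).symm
  · exact iff_of_false (fun h0 => h0 rfl) (fun h' => h h'.2)

lemma TermOrder.IsLeadExp.unique {t : TermOrder n} {f : MvPolynomial (Fin n) k}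
    {α β : Fin n →₀ ℕ} (hα : t.IsLeadExp f α) (hβ : t.IsLeadExp f β) : α = β := by
  by_contra hne
  exact t.irrefl α (t.trans _ _ _ (hβ.2 α hα.1 hne) (hα.2 β hβ.1 (Ne.symm hne)))

lemma TermOrder.exists_isLeadExp (t : TermOrder n) {f : MvPolynomial (Fin n) k} (hf : f ≠ 0) :
    ∃ α, t.IsLeadExp f α := by
  let r : f.support → f.support → Prop := fun a b => t.lt b a
  have : IsTrans _ r := ⟨fun a b c hab hbc => t.trans _ _ _ hbc hab⟩
  have : Std.Irrefl r := ⟨fun a => t.irrefl a⟩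
  obtain ⟨⟨α, hα⟩, -, hmax⟩ := (Finite.wellFounded_of_trans_of_irrefl r).has_min Set.univ
    ⟨⟨_, (support_nonempty.2 hf).choose_spec⟩, trivial⟩
  refine ⟨α, hα, fun β hβ hne => ?_⟩
  rcases t.trichotomous β α with h | h | h
  · exact h
  · exact absurd h hne
  · exact absurd h (hmax ⟨β, hβ⟩ trivial)

lemma TermOrder.leadExp_eq_of_isLeadExp {t : TermOrder n} {f : MvPolynomial (Fin n) k}
    {α : Fin n →₀ ℕ} (h : t.IsLeadExp f α) : t.leadExp f = α := by
  have hex : ∃ γ, t.IsLeadExp f γ := ⟨α, h⟩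
  rw [TermOrder.leadExp, dif_pos hex]
  exact hex.choose_spec.unique h

lemma TermOrder.leadTerm_monomial (t : TermOrder n) (α : Fin n →₀ ℕ) (c : k) :
    t.leadTerm (monomial α c) = monomial α c := by
  classical
  by_cases hc : c = 0
  · simp [TermOrder.leadTerm, hc]
  · have hlead : t.IsLeadExp (monomial α c) α :=
      ⟨by simp [support_monomial, hc], fun β hβ hne => absurd (by simpa [support_monomial, hc]
        using hβ) hne⟩
    rw [TermOrder.leadTerm, t.leadExp_eq_of_isLeadExp hlead, coeff_monomial, if_pos rfl]

lemma monomial_coeff_mem_of_mem_span_monomial {S : Set (Fin n →₀ ℕ)}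
    {p : MvPolynomial (Fin n) k} (hp : p ∈ Ideal.span ((fun α => monomial α (1 : k)) '' S))
    (α : Fin n →₀ ℕ) :
    monomial α (coeff α p) ∈ Ideal.span ((fun α => monomial α (1 : k)) '' S) := by
  classical
  rw [mem_ideal_span_monomial_image] at hp ⊢
  intro β hβ
  rw [support_monomial] at hβ
  split_ifs at hβ with hα
  · simp at hβ
  · rw [Finset.mem_singleton.1 hβ]
    exact hp α (MvPolynomial.mem_support_iff.2 hα)

lemma isLeadExp_iff_isLeadExp_initialForm {ω : Fin n → ℝ} {t t' : TermOrder n}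
    (ht : t'.lt = refineLt ω t) (f : MvPolynomial (Fin n) k) (α : Fin n →₀ ℕ) :
    t'.IsLeadExp f α ↔ t.IsLeadExp (initialForm ω f) α := by
  simp only [TermOrder.IsLeadExp, mem_support_initialForm, ht, refineLt, wt_eq_weight]
  constructor
  · rintro ⟨hα, hlt⟩
    have hmax : ∀ γ ∈ f.support, weight ω γ ≤ weight ω α := fun γ hγ => by
      by_cases hγα : γ = α
      · rw [hγα]
      · rcases hlt γ hγ hγα with h | h
        exacts [h.le, h.1.le]
    refine ⟨⟨hα, hmax⟩, fun β ⟨hβ, hβmax⟩ hne => ?_⟩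
    rcases hlt β hβ hne with h | h
    · exact absurd (hβmax α hα) (not_le.2 h)
    · exact h.2
  · rintro ⟨⟨hα, hmax⟩, hlt⟩
    refine ⟨hα, fun β hβ hne => ?_⟩
    rcases (hmax β hβ).lt_or_eq with h | h
    · exact Or.inl h
    · exact Or.inr ⟨h, hlt β ⟨hβ, fun γ hγ => h ▸ hmax γ hγ⟩ hne⟩

lemma leadTerm_eq_leadTerm_initialForm {ω : Fin n → ℝ} {t t' : TermOrder n}
    (ht : t'.lt = refineLt ω t) (f : MvPolynomial (Fin n) k) :
    t'.leadTerm f = t.leadTerm (initialForm ω f) := by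
  rcases eq_or_ne f 0 with rfl | hf
  · simp [TermOrder.leadTerm, initialForm]
  obtain ⟨α, hα⟩ := t'.exists_isLeadExp hf
  have hα' := (isLeadExp_iff_isLeadExp_initialForm ht f α).1 hα
  rw [TermOrder.leadTerm, TermOrder.leadTerm, t'.leadExp_eq_of_isLeadExp hα,
    t.leadExp_eq_of_isLeadExp hα', coeff_initialForm, if_pos (mem_support_initialForm.1 hα'.1).2]

end TermOrders

theorem monomial_initial_ideal_refinement_general {k : Type*} [Field k]
    (I : Ideal (MvPolynomial (Fin n) k)) (ω : Fin n → ℝ)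
    (hmon : ∃ S : Set (Fin n →₀ ℕ),
        initialIdealW ω I = Ideal.span ((fun α => (monomial α (1 : k))) '' S)) :
    ∀ t t' : TermOrder n, t'.lt = refineLt ω t →
      initialIdealT t' I = initialIdealW ω I := by
  obtain ⟨S, hS⟩ := hmon
  intro t t' ht
  apply le_antisymm
  · refine Ideal.span_le.2 ?_
    rintro _ ⟨f, hfI, hf0, rfl⟩
    have hf : initialForm ω f ∈ initialIdealW ω I := Ideal.subset_span ⟨f, hfI, hf0, rfl⟩
    rw [hS] at hf ⊢
    rw [leadTerm_eq_leadTerm_initialForm ht, TermOrder.leadTerm]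
    exact monomial_coeff_mem_of_mem_span_monomial hf _
  · rw [hS, Ideal.span_le]
    rintro _ ⟨s, hs, rfl⟩
    have hmem : monomial s (1 : k) ∈ initialIdealW ω I := hS ▸ Ideal.subset_span ⟨s, hs, rfl⟩
    obtain ⟨g, hgI, hg0, hg⟩ := exists_initialForm_eq_of_mem_initialIdealW hmem
      (isWeightedHomogeneous_monomial ω s 1 rfl) (monomial_eq_zero.not.2 one_ne_zero)
    refine Ideal.subset_span ⟨g, hgI, hg0, ?_⟩
    rw [leadTerm_eq_leadTerm_initialForm ht, hg, t.leadTerm_monomial]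

/-- If the generalized initial ideal `in_ω(I)` is a monomial ideal, then
for every term ordering `t`, the refinement `<_ω` of `ω` by `t` satisfies
`in_{<_ω}(I) = in_ω(I)`. -/
theorem monomial_initial_ideal_refinement {k : Type*} [Field k]
    (I : Ideal (MvPolynomial (Fin n) k)) (ω : Fin n → ℝ) (hω : ∀ i, 0 ≤ ω i)
    (hmon : ∃ S : Set (Fin n →₀ ℕ),
        initialIdealW ω I = Ideal.span ((fun α => (monomial α (1 : k))) '' S)) :
    ∀ t t' : TermOrder n, t'.lt = refineLt ω t →
      initialIdealT t' I = initialIdealW ω I :=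
  monomial_initial_ideal_refinement_general I ω hmon
end
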